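/- If D is an integrable distribution whose orthogonal complement D⊥ is locally spanned by Killing vector fields of g, then D is totally geodesic (the symmetric part of its second fundamental form vanishes). -/

import Mathlib

/-- Abstract algebraic model of the `C^∞(M)`-module of vector fields on a
Riemannian manifold `(M,g)`: metric `g`, Lie bracket, Levi-Civita connection
`nabla` and the action `act X f = X(f)` of vector fields on functions. -/
structure RiemGeom (C V : Type*) [CommRing C] [AddCommGroup V] [Module C V] where
  g : V →ₗ[C] V →ₗ[C] C
  g_symm : ∀ X Y, g X Y = g Y X
  g_nondeg : ∀ X, (∀ Y, g X Y = 0) → X = 0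
  bracket : V → V → V
  nabla : V → V → V
  act : V → C → C
  act_add : ∀ X f₁ f₂, act X (f₁ + f₂) = act X f₁ + act X f₂
  act_mul : ∀ X f₁ f₂, act X (f₁ * f₂) = f₁ * act X f₂ + f₂ * act X f₁
  act_add_left : ∀ X Y f, act (X + Y) f = act X f + act Y f
  act_smul_left : ∀ (f h : C) X, act (f • X) h = f * act X h
  nabla_add_left : ∀ X X' Y, nabla (X + X') Y = nabla X Y + nabla X' Y
  nabla_smul_left : ∀ (f : C) X Y, nabla (f • X) Y = f • nabla X Y
  nabla_add_right : ∀ X Y Y', nabla X (Y + Y') = nabla X Y + nabla X Y'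
  nabla_leibniz : ∀ X (f : C) Y, nabla X (f • Y) = act X f • Y + f • nabla X Y
  torsion_free : ∀ X Y, nabla X Y - nabla Y X = bracket X Y
  metric_compat : ∀ X Y Z, act X (g Y Z) = g (nabla X Y) Z + g Y (nabla X Z)

/-- A regular distribution `D` in a Riemannian manifold, together with its
orthogonal complement `Dperp` and the orthogonal projection `piD` onto `D`. -/
structure RiemDist {C V : Type*} [CommRing C] [AddCommGroup V] [Module C V]
    (G : RiemGeom C V) where
  D : Submodule C V
  Dperp : Submodule C V
  piD : V →ₗ[C] V
  piD_mem : ∀ v, piD v ∈ D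
  piD_id : ∀ v ∈ D, piD v = v
  perp_mem : ∀ v, v - piD v ∈ Dperp
  piD_perp : ∀ w ∈ Dperp, piD w = 0
  orth : ∀ v ∈ D, ∀ w ∈ Dperp, G.g v w = 0

variable {C V : Type*} [CommRing C] [AddCommGroup V] [Module C V]

/-- The intrinsic connection `∇^D_X Y = π^D (∇_X Y)`. -/
def nablaD (G : RiemGeom C V) (P : RiemDist G) (X Y : V) : V := P.piD (G.nabla X Y)

/-- The second fundamental form `B(X,Y) = ∇_X Y - ∇^D_X Y = π^{D⊥}(∇_X Y)`. -/
def sff (G : RiemGeom C V) (P : RiemDist G) (X Y : V) : V :=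
  G.nabla X Y - P.piD (G.nabla X Y)

/-- The Lie derivative of the metric: `(L_Z g)(X,Y)`. -/
def lieMetric (G : RiemGeom C V) (Z X Y : V) : C :=
  G.act Z (G.g X Y) - G.g (G.bracket Z X) Y - G.g X (G.bracket Z Y)

/-- The exterior derivative of the one-form `i_Z g`: `(d (i_Z g))(X,Y)`. -/
def dIZg (G : RiemGeom C V) (Z X Y : V) : C :=
  G.act X (G.g Z Y) - G.act Y (G.g Z X) - G.g Z (G.bracket X Y)

/-- The curvature endomorphism `R(X,Y)Z` of the Levi-Civita connection. -/
def curvR (G : RiemGeom C V) (X Y Z : V) : V :=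
  G.nabla X (G.nabla Y Z) - G.nabla Y (G.nabla X Z) - G.nabla (G.bracket X Y) Z

/-- The curvature endomorphism `R^D(X,Y)Z` of the intrinsic connection, taken
with respect to the projected bracket `[X,Y]^D = π^D [X,Y]`. -/
def curvRD (G : RiemGeom C V) (P : RiemDist G) (X Y Z : V) : V :=
  nablaD G P X (nablaD G P Y Z) - nablaD G P Y (nablaD G P X Z) -
    nablaD G P (P.piD (G.bracket X Y)) Z

/-!
Orthogonality of `D` and `D⊥` together with metric compatibility gives the Weingarten relation
`g(B(X,Y), Z) = -g(Y, ∇_X Z)` for `Y ∈ D`, `Z ∈ D⊥`. Torsion-freeness rewrites the Lie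
derivative as `(L_Z g)(X,Y) = g(∇_X Z, Y) + g(X, ∇_Y Z)`, so the Killing equation says exactly that
`B(X,Y) + B(Y,X)` is orthogonal to `D⊥`. Since it also lies in `D⊥`, it is orthogonal to everything
and vanishes by nondegeneracy.
-/

namespace RiemGeom

variable (G : RiemGeom C V)

theorem act_zero (W : V) : G.act W 0 = 0 := by
  simpa using G.act_add W 0 0

theorem lieMetric_eq_g_nabla (Z X Y : V) :
    lieMetric G Z X Y = G.g (G.nabla X Z) Y + G.g X (G.nabla Y Z) := by
  rw [lieMetric, ← G.torsion_free, ← G.torsion_free, G.metric_compat]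
  simp only [map_sub, LinearMap.sub_apply]
  ring

end RiemGeom

namespace RiemDist

variable {G : RiemGeom C V} (P : RiemDist G)

theorem sff_mem_Dperp (X Y : V) : sff G P X Y ∈ P.Dperp :=
  P.perp_mem _

theorem g_sff_eq_neg_g_nabla (X : V) {Y Z : V} (hY : Y ∈ P.D) (hZ : Z ∈ P.Dperp) :
    G.g (sff G P X Y) Z = -G.g Y (G.nabla X Z) := by
  have hcompat := G.metric_compat X Y Z
  rw [P.orth Y hY Z hZ, G.act_zero] at hcompat
  rw [sff, map_sub, LinearMap.sub_apply, P.orth _ (P.piD_mem _) Z hZ]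
  linear_combination -hcompat

theorem eq_zero_of_mem_Dperp {W : V} (hW : W ∈ P.Dperp)
    (horth : ∀ Z ∈ P.Dperp, G.g W Z = 0) : W = 0 := by
  refine G.g_nondeg W fun v => ?_
  have hsplit : v = P.piD v + (v - P.piD v) := by abel
  rw [hsplit, map_add, horth _ (P.perp_mem v), G.g_symm, P.orth _ (P.piD_mem v) W hW, add_zero]

end RiemDist

theorem integrable_killing_orth_totally_geodesic_general
    {C V : Type*} [CommRing C] [AddCommGroup V] [Module C V]
    (G : RiemGeom C V) (P : RiemDist G)
    (hKilling : ∀ Z ∈ P.Dperp, ∀ X Y : V, lieMetric G Z X Y = 0) :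
    ∀ X ∈ P.D, ∀ Y ∈ P.D, sff G P X Y + sff G P Y X = 0 := by
  intro X hX Y hY
  refine P.eq_zero_of_mem_Dperp (add_mem (P.sff_mem_Dperp X Y) (P.sff_mem_Dperp Y X)) ?_
  intro Z hZ
  have hKZ := hKilling Z hZ X Y
  rw [G.lieMetric_eq_g_nabla, G.g_symm] at hKZ
  rw [map_add, LinearMap.add_apply, P.g_sff_eq_neg_g_nabla X hY hZ, P.g_sff_eq_neg_g_nabla Y hX hZ]
  linear_combination -hKZ

/-- if `D` is integrable and every section of `D⊥` is a Killing
vector field of `g`, then `D` is totally geodesic: the symmetric part of its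
second fundamental form vanishes. -/
theorem integrable_killing_orth_totally_geodesic
    {C V : Type*} [CommRing C] [AddCommGroup V] [Module C V]
    (G : RiemGeom C V) (P : RiemDist G)
    (hinv : ∀ X ∈ P.D, ∀ Y ∈ P.D, G.bracket X Y ∈ P.D)
    (hKilling : ∀ Z ∈ P.Dperp, ∀ X Y : V, lieMetric G Z X Y = 0) :
    ∀ X ∈ P.D, ∀ Y ∈ P.D, sff G P X Y + sff G P Y X = 0 :=
  integrable_killing_orth_totally_geodesic_general G P hKilling
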